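/- Fix k ∈ ℕ₀ and suppose b^0, b^1, …, b^k are real numbers such that m_{n,n}^k = Σ_{l=0}^k b^l/(2n−2l−1) − Σ_{l=0}^k b^l/(2n+2l+3) for all n ∈ ℤ. Then Σ_{l=0}^k (1/(2l+1) + 1/(2l+3))·b^l = 2/(2k+1) − 2/(2k+3). -/

import Mathlib

open Finset

/-- The Legendre polynomial of degree `n` on `[-1,1]`, via Rodrigues' formula. -/
noncomputable def legP (n : ℕ) (x : ℝ) : ℝ :=
  (1 / (2 ^ n * n.factorial)) * iteratedDeriv n (fun y : ℝ => (y ^ 2 - 1) ^ n) x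

/-- The complex-valued extension of the Legendre polynomials to integer degrees,
with `P_{-n-1}(x) = i * P_n(x)` for `n ∈ ℕ`. -/
noncomputable def legPZ (n : ℤ) (x : ℝ) : ℂ :=
  if 0 ≤ n then (legP n.toNat x : ℂ) else Complex.I * (legP (-n - 1).toNat x : ℂ)

/-- The complex-valued polynomial `I_n` defined by `(2n+1) I_n(x) = P_{n+1}(x) - P_{n-1}(x)`. -/
noncomputable def legI (n : ℤ) (x : ℝ) : ℂ :=
  (legPZ (n + 1) x - legPZ (n - 1) x) / (2 * (n : ℂ) + 1)

/-- The moment `m_{p,q}^k = (p+q+1) ∫_{-1}^1 x^{2k} I_p(x) I_q(x) dx`. -/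
noncomputable def momI (p q : ℤ) (k : ℕ) : ℂ :=
  ((p : ℂ) + q + 1) * ∫ x in (-1 : ℝ)..1, (x : ℂ) ^ (2 * k) * legI p x * legI q x

lemma legP0 (x : ℝ) : legP 0 x = 1 := by simp [legP]

lemma legP1 (x : ℝ) : legP 1 x = x := by
  have h : (fun y : ℝ => (y ^ 2 - 1) ^ 1) = fun y : ℝ => y ^ 2 - 1 := by
    funext y; ring
  simp [legP, h, iteratedDeriv_one]

lemma legI0 (x : ℝ) : legI 0 x = x - Complex.I := by
  simp [legI, legPZ]
  norm_num [legP0, legP1]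

lemma int_pow (m : ℕ) :
    (∫ x in (-1 : ℝ)..1, (x : ℂ) ^ m) = (((1 - (-1 : ℝ) ^ (m + 1)) / (m + 1) : ℝ) : ℂ) := by
  have h : (∫ x in (-1 : ℝ)..1, (x : ℂ) ^ m)
      = ((∫ x in (-1 : ℝ)..1, x ^ m : ℝ) : ℂ) := by
    rw [← intervalIntegral.integral_ofReal]
    norm_num
  rw [h, integral_pow]
  norm_num

lemma momI00 (k : ℕ) :
    momI 0 0 k = ((2 / (2 * (k : ℝ) + 3) - 2 / (2 * (k : ℝ) + 1) : ℝ) : ℂ) := by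
  have hfun : ∀ x : ℝ, (x : ℂ) ^ (2 * k) * legI 0 x * legI 0 x
      = (x : ℂ) ^ (2 * k + 2) - (2 * Complex.I) * (x : ℂ) ^ (2 * k + 1)
        - (x : ℂ) ^ (2 * k) := by
    intro x
    rw [legI0]
    have : Complex.I * Complex.I = -1 := Complex.I_mul_I
    ring_nf
    rw [Complex.I_sq]
    ring
  have h1 : IntervalIntegrable (fun x : ℝ => (x : ℂ) ^ (2 * k + 2)) MeasureTheory.volume (-1) 1 :=
    ((by continuity : Continuous _).intervalIntegrable _ _)
  have h2 : IntervalIntegrable (fun x : ℝ => (2 * Complex.I) * (x : ℂ) ^ (2 * k + 1)) MeasureTheory.volume (-1) 1 :=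
    ((by continuity : Continuous _).intervalIntegrable _ _)
  have h3 : IntervalIntegrable (fun x : ℝ => (x : ℂ) ^ (2 * k)) MeasureTheory.volume (-1) 1 :=
    ((by continuity : Continuous _).intervalIntegrable _ _)
  have : (∫ x in (-1 : ℝ)..1, (x : ℂ) ^ (2 * k) * legI 0 x * legI 0 x)
      = (∫ x in (-1 : ℝ)..1, (x : ℂ) ^ (2 * k + 2))
        - (∫ x in (-1 : ℝ)..1, (2 * Complex.I) * (x : ℂ) ^ (2 * k + 1))
        - (∫ x in (-1 : ℝ)..1, (x : ℂ) ^ (2 * k)) := by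
    rw [intervalIntegral.integral_congr (g := fun x : ℝ =>
        (x : ℂ) ^ (2 * k + 2) - (2 * Complex.I) * (x : ℂ) ^ (2 * k + 1) - (x : ℂ) ^ (2 * k))
        (fun x _ => hfun x),
      intervalIntegral.integral_sub (h1.sub h2) h3, intervalIntegral.integral_sub h1 h2]
  rw [momI, this, intervalIntegral.integral_const_mul, int_pow, int_pow, int_pow]
  have e1 : (-1 : ℝ) ^ (2 * k + 2 + 1) = -1 := by
    rw [pow_succ, pow_succ]; norm_num [pow_mul]; rw [pow_succ]; norm_num [pow_mul]
  have e2 : (-1 : ℝ) ^ (2 * k + 1 + 1) = 1 := by norm_num [pow_mul, pow_add]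
  have e3 : (-1 : ℝ) ^ (2 * k + 1) = -1 := by rw [pow_succ]; norm_num [pow_mul]
  rw [e1, e2, e3]
  push_cast
  ring

theorem statement_10 (k : ℕ) (b : ℕ → ℝ)
    (hb : ∀ n : ℤ, momI n n k =
      ((∑ l ∈ Finset.range (k + 1), b l / (2 * (n : ℝ) - 2 * (l : ℝ) - 1)
        - ∑ l ∈ Finset.range (k + 1), b l / (2 * (n : ℝ) + 2 * (l : ℝ) + 3) : ℝ) : ℂ)) :
    ∑ l ∈ Finset.range (k + 1), (1 / (2 * (l : ℝ) + 1) + 1 / (2 * (l : ℝ) + 3)) * b l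
      = 2 / (2 * (k : ℝ) + 1) - 2 / (2 * (k : ℝ) + 3) := by
  have h := hb 0
  rw [momI00] at h
  have h' : (2 / (2 * (k : ℝ) + 3) - 2 / (2 * (k : ℝ) + 1) : ℝ)
      = ∑ l ∈ Finset.range (k + 1), b l / (2 * ((0 : ℤ) : ℝ) - 2 * (l : ℝ) - 1)
        - ∑ l ∈ Finset.range (k + 1), b l / (2 * ((0 : ℤ) : ℝ) + 2 * (l : ℝ) + 3) :=
    Complex.ofReal_inj.mp h
  have key : ∑ l ∈ Finset.range (k + 1), (1 / (2 * (l : ℝ) + 1) + 1 / (2 * (l : ℝ) + 3)) * b l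
      = -(∑ l ∈ Finset.range (k + 1), b l / (2 * ((0 : ℤ) : ℝ) - 2 * (l : ℝ) - 1)
        - ∑ l ∈ Finset.range (k + 1), b l / (2 * ((0 : ℤ) : ℝ) + 2 * (l : ℝ) + 3)) := by
    rw [neg_sub, ← Finset.sum_sub_distrib]
    refine Finset.sum_congr rfl fun l _ => ?_
    have h1 : (2 * (l : ℝ) + 1) ≠ 0 := by positivity
    have h2 : (2 * (l : ℝ) + 3) ≠ 0 := by positivity
    have e : (2 * ((0 : ℤ) : ℝ) - 2 * (l : ℝ) - 1) = -(2 * (l : ℝ) + 1) := by push_cast; ring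
    rw [e, div_neg, sub_neg_eq_add]
    push_cast
    field_simp
    ring
  rw [key, ← h']
  ring
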